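/- arXiv:1611.08120 — 3 statements merged into one kernel-verified Lean document; each statement's English description precedes it below -/
import Mathlib

section
/- Let p be an odd prime such that the Pisano period l_p equals p−1 and β(p) = 1. Then in F_p[x] the greatest common divisor of the Fibonacci polynomial f(x) and x^{p−1} − 1 equals (x^{p−1} − 1)/(x² + x − 1); in particular x² + x − 1 divides x^{p−1} − 1 in F_p[x]. -/
open Polynomial

/-- The Fibonacci sequence over `ZMod p`: `F 0 = 0`, `F 1 = 1`, `F (n+2) = F (n+1) + F n`. -/
def fibMod (p : ℕ) : ℕ → ZMod p
  | 0 => 0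
  | 1 => 1
  | n + 2 => fibMod p (n + 1) + fibMod p n

/-- The Pisano period of `p`: the least `t > 0` with `F t = F 0 = 0` and `F (t+1) = F 1 = 1`. -/
noncomputable def pisano (p : ℕ) : ℕ :=
  sInf {t : ℕ | 0 < t ∧ fibMod p t = 0 ∧ fibMod p (t + 1) = 1}

/-- `β(p)`: the number of indices `0 ≤ i < l_p` with `F i = 0` in `ZMod p`. -/
noncomputable def betaP (p : ℕ) : ℕ :=
  ((Finset.range (pisano p)).filter fun i => fibMod p i = 0).card

/-- The Fibonacci polynomial `f(x) = ∑_{i=0}^{l_p - 1} F_i x^i` over `ZMod p`. -/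
noncomputable def fibPoly (p : ℕ) : (ZMod p)[X] :=
  ∑ i ∈ Finset.range (pisano p), C (fibMod p i) * X ^ i

/-- Cyclic shift of a vector of length `l`: the shift `v ↦ (v_{l-1}, v_0, …, v_{l-2})`,
which corresponds to multiplication by `x` modulo `x^l - 1` on coefficient vectors. -/
def cyclicShift (p l : ℕ) (v : Fin l → ZMod p) : Fin l → ZMod p :=
  fun i => v ⟨((i : ℕ) + (l - 1)) % l, Nat.mod_lt _ i.pos⟩

/-- The coefficient vector of length `l` of a polynomial. -/
def polyVec (p l : ℕ) (g : (ZMod p)[X]) : Fin l → ZMod p := fun i => g.coeff i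

/-- The cyclic code of length `l` generated by `g`: the ideal generated by the image of `g`
in `F_p[x]/(x^l - 1)`, identified with the subspace of `F_p^l` of coefficient vectors via
`a_0 + a_1 x + ⋯ + a_{l-1} x^{l-1} ↦ (a_0, …, a_{l-1})`; equivalently (since multiplication
by `x` is the cyclic shift), the `F_p`-span of all cyclic shifts of the coefficient vector
of `g`. -/
noncomputable def cyclicCode (p l : ℕ) (g : (ZMod p)[X]) :
    Submodule (ZMod p) (Fin l → ZMod p) :=
  Submodule.span (ZMod p) {w | ∃ k : ℕ, w = (cyclicShift p l)^[k] (polyVec p l g)}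

/-- The cyclic code of length `l` generated by the Fibonacci polynomial `f(x)`. -/
noncomputable def fibCode (p l : ℕ) : Submodule (ZMod p) (Fin l → ZMod p) :=
  cyclicCode p l (fibPoly p)

/-!
Multiplying `f` by `x² + x - 1` telescopes the Fibonacci recurrence, leaving only boundary terms;
with `l = l_p`, `F_l = 0` and `F_{l+1} = 1` force `F_{l-1} = 1`, so `(x² + x - 1) f = x (x^l - 1)`.
As `x² + x - 1` is prime to `x`, it divides `x^l - 1` and `f = x · q` with `q = (x^l - 1)/(x² + x - 1)`;
then `gcd(f, x^l - 1) = gcd(x q, (x² + x - 1) q) = q`.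
-/

theorem fibMod_add_two (p n : ℕ) : fibMod p (n + 2) = fibMod p (n + 1) + fibMod p n := rfl

theorem X_sq_add_X_sub_one_mul_sum_fibMod (p n : ℕ) :
    (X ^ 2 + X - 1 : (ZMod p)[X]) * ∑ i ∈ Finset.range (n + 1), C (fibMod p i) * X ^ i
      = C (fibMod p n) * X ^ (n + 2) + C (fibMod p (n + 1)) * X ^ (n + 1) - X := by
  induction n with
  | zero => simp [fibMod]
  | succ n ih =>
    rw [Finset.sum_range_succ, mul_add, ih, fibMod_add_two, C_add]
    ring

theorem pisano_spec {p : ℕ} (h : pisano p ≠ 0) :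
    fibMod p (pisano p) = 0 ∧ fibMod p (pisano p + 1) = 1 :=
  (Nat.sInf_mem (Nat.nonempty_of_pos_sInf (Nat.pos_of_ne_zero h))).2

theorem X_sq_add_X_sub_one_mul_fibPoly {p : ℕ} (h : pisano p ≠ 0) :
    (X ^ 2 + X - 1 : (ZMod p)[X]) * fibPoly p = X * (X ^ pisano p - 1) := by
  obtain ⟨n, hn⟩ := Nat.exists_eq_add_one_of_ne_zero h
  obtain ⟨hzero, hone⟩ := pisano_spec h
  rw [hn] at hzero hone
  have hprev : fibMod p n = 1 := by
    rwa [fibMod_add_two, hzero, zero_add] at hone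
  rw [fibPoly, hn, X_sq_add_X_sub_one_mul_sum_fibMod, hprev, hzero]
  simp only [map_one, map_zero, one_mul, zero_mul]
  ring

theorem isCoprime_X_X_sq_add_X_sub_one {R : Type*} [CommRing R] :
    IsCoprime (X : R[X]) (X ^ 2 + X - 1) :=
  ⟨X + 1, -1, by ring⟩

theorem gcd_eq_div_of_mul_eq_X_mul {K : Type*} [Field K] [DecidableEq K] {f g h : K[X]}
    (hg : g.Monic) (hh : h.Monic) (hXg : IsCoprime X g) (hgf : g * f = X * h) :
    gcd f h = h / g ∧ g ∣ h := by
  have hdvd : g ∣ h := hXg.symm.dvd_of_dvd_mul_left ⟨f, hgf.symm⟩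
  set q := h / g
  have hgq : g * q = h := EuclideanDomain.mul_div_cancel' hg.ne_zero hdvd
  have hq : q.Monic := hg.of_mul_monic_left (hgq ▸ hh)
  have hf : f = X * q := mul_left_cancel₀ hg.ne_zero (by rw [hgf, ← hgq]; ring)
  have hgcdX : gcd (X : K[X]) g = 1 := by
    rw [← normalize_gcd]
    exact normalize_eq_one.mpr ((gcd_isUnit_iff _ _).mpr hXg)
  refine ⟨?_, hdvd⟩
  rw [hf, ← hgq, mul_comm X, mul_comm g, gcd_mul_left, hgcdX, mul_one, hq.normalize_eq_self]

theorem fibPoly_gcd_general (p : ℕ) [Fact p.Prime]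
    (hl : pisano p = p - 1) :
    gcd (fibPoly p) (X ^ (p - 1) - 1 : (ZMod p)[X])
        = (X ^ (p - 1) - 1) / (X ^ 2 + X - 1) ∧
      (X ^ 2 + X - 1 : (ZMod p)[X]) ∣ (X ^ (p - 1) - 1) := by
  have hl0 : pisano p ≠ 0 := by
    have := (Fact.out : p.Prime).two_le
    omega
  have hmonic : (X ^ (p - 1) - 1 : (ZMod p)[X]).Monic := by
    simpa using monic_X_pow_sub_C (1 : ZMod p) (hl ▸ hl0)
  refine gcd_eq_div_of_mul_eq_X_mul (by monicity!) hmonic isCoprime_X_X_sq_add_X_sub_one ?_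
  rw [X_sq_add_X_sub_one_mul_fibPoly hl0, hl]

/-- For an odd prime `p` with Pisano period `l_p = p - 1` and `β(p) = 1`,
the (monic) greatest common divisor of the Fibonacci polynomial `f(x)` and `x^{p-1} - 1`
in `F_p[x]` is `(x^{p-1} - 1)/(x² + x - 1)`; in particular `x² + x - 1` divides
`x^{p-1} - 1` in `F_p[x]`. -/
theorem fibPoly_gcd (p : ℕ) [Fact p.Prime] (hodd : Odd p)
    (hl : pisano p = p - 1) (hb : betaP p = 1) :
    gcd (fibPoly p) (X ^ (p - 1) - 1 : (ZMod p)[X])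
        = (X ^ (p - 1) - 1) / (X ^ 2 + X - 1) ∧
      (X ^ 2 + X - 1 : (ZMod p)[X]) ∣ (X ^ (p - 1) - 1) :=
  fibPoly_gcd_general p hl
end

section
/- Let p be an odd prime such that the Pisano period l_p equals p−1 and β(p) = 2. Then the cyclic code C = ⟨f(x)⟩ of length p−1 over F_p generated by the Fibonacci polynomial f(x) has F_p-dimension 2 and minimum Hamming distance p−3. -/
/-!
The coefficient vector of `f` is one period `(F_0, …, F_{l-1})` of the `l`-periodic Fibonacci
sequence, so its cyclic shifts are the windows `(F_{i+t})_{i<l}`. Every window is a combination of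
the windows at `t = 0` and `t = 1`, which are independent: the code has dimension `2`, and its
codewords are the windows of the sequences `G` satisfying the Fibonacci recurrence. If such a `G`
is nonzero and `a` is its first zero, then `G (a + k) = G (a + 1) F_k` with `G (a + 1) ≠ 0`, so `G`
has at most `β(p)` zeros among its first `l` terms, while `F` itself has exactly `β(p)`. Hence the
minimum distance is `l - β(p) = p - 3`.
-/

open Polynomial

open Finset Submodule

def IsFibLike {R : Type*} [Add R] (G : ℕ → R) : Prop :=
  ∀ n, G (n + 2) = G (n + 1) + G n

namespace IsFibLike

variable {R : Type*} {G : ℕ → R}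

theorem eq_zero_of_consecutive_zeros [AddMonoid R] (hG : IsFibLike G) {a : ℕ}
    (h₀ : G a = 0) (h₁ : G (a + 1) = 0) : G = 0 := by
  let P n := G n = 0 ∧ G (n + 1) = 0
  have step : ∀ n, P (n + 1) ↔ P n := fun n => by
    simp only [P, hG n]
    constructor
    · rintro ⟨h, h'⟩
      rw [h, zero_add] at h'
      exact ⟨h', h⟩
    · rintro ⟨h, h'⟩
      rw [h, h', add_zero]
      exact ⟨rfl, rfl⟩
  have hP : ∀ n, P n ↔ P 0 := fun n => by
    induction n with
    | zero => rfl
    | succ n ih => rw [step, ih]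
  funext n
  exact ((hP n).2 ((hP a).1 ⟨h₀, h₁⟩)).1

theorem apply_add_eq_mul_fib [Semiring R] (hG : IsFibLike G) {a : ℕ} (ha : G a = 0) :
    ∀ k, G (a + k) = G (a + 1) * Nat.fib k
  | 0 => by simpa using ha
  | 1 => by simp
  | k + 2 => by
    rw [← add_assoc, hG, add_assoc, hG.apply_add_eq_mul_fib ha (k + 1), hG.apply_add_eq_mul_fib ha k,
      Nat.fib_add_two, Nat.cast_add, mul_add, add_comm]

theorem card_zeros_le [Semiring R] [NoZeroDivisors R] [DecidableEq R] (hG : IsFibLike G)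
    (hG0 : G ≠ 0) (l : ℕ) :
    #{i ∈ range l | G i = 0} ≤ #{i ∈ range l | (Nat.fib i : R) = 0} := by
  by_cases hz : ∃ i, G i = 0
  swap
  · simp only [not_exists] at hz
    simp [hz]
  have ha : G (Nat.find hz) = 0 := Nat.find_spec hz
  have ha1 : G (Nat.find hz + 1) ≠ 0 := fun h => hG0 (hG.eq_zero_of_consecutive_zeros ha h)
  refine card_le_card_of_injOn (· - Nat.find hz) (fun i hi => ?_) (fun i hi j hj hij => ?_)
  · simp only [coe_filter, mem_range, Set.mem_ofPred_eq] at hi ⊢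
    have hai : Nat.find hz ≤ i := Nat.find_min' hz hi.2
    refine ⟨by omega, ?_⟩
    have hGi := hG.apply_add_eq_mul_fib ha (i - Nat.find hz)
    rw [Nat.add_sub_cancel' hai, hi.2] at hGi
    exact (mul_eq_zero.mp hGi.symm).resolve_left ha1
  · simp only [coe_filter, Set.mem_ofPred_eq] at hi hj hij
    have := Nat.find_min' hz hi.2
    have := Nat.find_min' hz hj.2
    omega

theorem mul_add_mul_succ [CommSemiring R] (hG : IsFibLike G) (s t : R) :
    IsFibLike fun n => s * G n + t * G (n + 1) := fun n => by
  show s * G (n + 2) + t * G (n + 1 + 2) = _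
  rw [hG n, hG (n + 1)]
  ring

end IsFibLike

theorem hammingNorm_eq_sub_card_zeros {R : Type*} [Zero R] [DecidableEq R] (G : ℕ → R) (l : ℕ) :
    hammingNorm (fun i : Fin l => G i) = l - #{i ∈ range l | G i = 0} := by
  have hnz : hammingNorm (fun i : Fin l => G i) = #{i ∈ range l | ¬G i = 0} := by
    rw [hammingNorm, card_filter, card_filter,
      Fin.sum_univ_eq_sum_range (fun i => if G i ≠ 0 then 1 else 0)]
  have := card_filter_add_card_filter_not (s := range l) (fun i => G i = 0)
  rw [card_range] at this
  omega

section Fibonacci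

variable {p : ℕ}

theorem isFibLike_fibMod (p : ℕ) : IsFibLike (fibMod p) := fun _ => rfl

theorem fibMod_eq_fib (p : ℕ) : ∀ n, fibMod p n = Nat.fib n
  | 0 => by simp [fibMod]
  | 1 => by simp [fibMod]
  | n + 2 => by
    rw [fibMod, fibMod_eq_fib p (n + 1), fibMod_eq_fib p n, Nat.fib_add_two, Nat.cast_add,
      add_comm]

theorem fibMod_pisano (hl : 0 < pisano p) :
    fibMod p (pisano p) = 0 ∧ fibMod p (pisano p + 1) = 1 :=
  (Nat.sInf_mem (Nat.nonempty_of_pos_sInf hl)).2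

theorem periodic_fibMod (hl : 0 < pisano p) : Function.Periodic (fibMod p) (pisano p) := by
  intro n
  obtain ⟨h₀, h₁⟩ := fibMod_pisano hl
  rw [add_comm, (isFibLike_fibMod p).apply_add_eq_mul_fib h₀, h₁, one_mul, fibMod_eq_fib]

theorem betaP_le_pisano (p : ℕ) : betaP p ≤ pisano p :=
  (card_filter_le _ _).trans (card_range _).le

end Fibonacci

def fibWindow (p l t : ℕ) : Fin l → ZMod p := fun i => fibMod p (i + t)

section Window

variable {p l : ℕ}

theorem fibWindow_add_two (t : ℕ) :
    fibWindow p l (t + 2) = fibWindow p l (t + 1) + fibWindow p l t :=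
  funext fun i => isFibLike_fibMod p (i + t)

theorem fibWindow_mem_span :
    ∀ t, fibWindow p l t ∈ span (ZMod p) {fibWindow p l 0, fibWindow p l 1}
  | 0 => subset_span (by simp)
  | 1 => subset_span (by simp)
  | t + 2 => by
    rw [fibWindow_add_two]
    exact add_mem (fibWindow_mem_span (t + 1)) (fibWindow_mem_span t)

theorem periodic_fibWindow (hper : Function.Periodic (fibMod p) l) :
    Function.Periodic (fibWindow p l) l :=
  fun t => funext fun i => by simp only [fibWindow, ← add_assoc, hper _]

theorem cyclicShift_fibWindow (hper : Function.Periodic (fibMod p) l) (t : ℕ) :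
    cyclicShift p l (fibWindow p l t) = fibWindow p l (t + (l - 1)) := by
  funext i
  simp only [cyclicShift, fibWindow]
  rw [← hper.map_mod_nat, ← hper.map_mod_nat (i + (t + (l - 1))), Nat.mod_add_mod]
  congr 2
  omega

theorem iterate_cyclicShift_fibWindow (hper : Function.Periodic (fibMod p) l) (k : ℕ) :
    (cyclicShift p l)^[k] (fibWindow p l 0) = fibWindow p l (k * (l - 1)) := by
  induction k with
  | zero => simp
  | succ k ih =>
    rw [Function.iterate_succ_apply', ih, cyclicShift_fibWindow hper, add_one_mul]

theorem smul_fibWindow_add_smul_fibWindow (s t : ZMod p) :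
    s • fibWindow p l 0 + t • fibWindow p l 1 =
      fun i : Fin l => s * fibMod p i + t * fibMod p (i + 1) :=
  rfl

theorem fibWindow_linearIndependent (hl : 2 ≤ l) :
    LinearIndependent (ZMod p) ![fibWindow p l 0, fibWindow p l 1] := by
  rw [LinearIndependent.pair_iff]
  intro s t h
  rw [smul_fibWindow_add_smul_fibWindow] at h
  have h₀ : t = 0 := by simpa [fibMod] using congr_fun h ⟨0, by omega⟩
  have h₁ : s + t = 0 := by simpa [fibMod] using congr_fun h ⟨1, by omega⟩
  exact ⟨by simpa [h₀] using h₁, h₀⟩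

end Window

section Code

variable {p : ℕ}

theorem polyVec_fibPoly (p : ℕ) :
    polyVec p (pisano p) (fibPoly p) = fibWindow p (pisano p) 0 := by
  funext i
  simp [polyVec, fibPoly, fibWindow, coeff_C_mul, coeff_X_pow]

theorem fibCode_eq_span (hl : 0 < pisano p) :
    fibCode p (pisano p) =
      span (ZMod p) {fibWindow p (pisano p) 0, fibWindow p (pisano p) 1} := by
  have hper := periodic_fibMod hl
  apply le_antisymm
  · refine span_le.mpr ?_
    rintro _ ⟨k, rfl⟩
    rw [polyVec_fibPoly, iterate_cyclicShift_fibWindow hper]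
    exact fibWindow_mem_span _
  · refine span_le.mpr ?_
    simp only [Set.insert_subset_iff, Set.singleton_subset_iff]
    refine ⟨subset_span ⟨0, by rw [polyVec_fibPoly]; rfl⟩, subset_span ⟨pisano p - 1, ?_⟩⟩
    have hsq : (pisano p - 1) * (pisano p - 1) % pisano p = 1 % pisano p := by
      obtain ⟨k, hk⟩ : ∃ k, pisano p = k + 1 := ⟨pisano p - 1, by omega⟩
      rw [hk, Nat.add_sub_cancel]
      rcases k with _ | k
      · simp
      · rw [show (k + 1) * (k + 1) = 1 + (k + 1 + 1) * k by ring, Nat.add_mul_mod_self_left]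
    rw [polyVec_fibPoly, iterate_cyclicShift_fibWindow hper,
      ← (periodic_fibWindow hper).map_mod_nat, ← hsq, (periodic_fibWindow hper).map_mod_nat]

theorem finrank_fibCode [Fact p.Prime] (hl : 2 ≤ pisano p) :
    Module.finrank (ZMod p) (fibCode p (pisano p)) = 2 := by
  rw [fibCode_eq_span (by omega), ← Matrix.range_cons_cons_empty _ _ ![],
    finrank_span_eq_card (fibWindow_linearIndependent hl), Fintype.card_fin]

theorem isLeast_hammingNorm_fibCode [Fact p.Prime] (hl : 2 ≤ pisano p) :
    IsLeast {w : ℕ | ∃ v ∈ fibCode p (pisano p), v ≠ 0 ∧ hammingNorm v = w}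
      (pisano p - betaP p) := by
  have hβ : betaP p = #{i ∈ range (pisano p) | (Nat.fib i : ZMod p) = 0} := by
    simp only [betaP, fibMod_eq_fib]
  rw [fibCode_eq_span (by omega)]
  refine ⟨⟨fibWindow p (pisano p) 0, subset_span (by simp), fun h => ?_, ?_⟩, ?_⟩
  · simpa [fibWindow, fibMod] using congr_fun h ⟨1, hl⟩
  · exact hammingNorm_eq_sub_card_zeros (fibMod p) _
  · rintro _ ⟨v, hv, hv0, rfl⟩
    obtain ⟨s, t, rfl⟩ := mem_span_pair.mp hv
    rw [smul_fibWindow_add_smul_fibWindow,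
      hammingNorm_eq_sub_card_zeros fun n => s * fibMod p n + t * fibMod p (n + 1), hβ]
    have := ((isFibLike_fibMod p).mul_add_mul_succ s t).card_zeros_le
      (fun h => hv0 (funext fun i => congr_fun h i)) (pisano p)
    omega

end Code

theorem fibCode_beta_two_general (p : ℕ) [Fact p.Prime]
    (hl : pisano p = p - 1) (hb : betaP p = 2) :
    Module.finrank (ZMod p) (fibCode p (p - 1)) = 2 ∧
      IsLeast {w : ℕ | ∃ v ∈ fibCode p (p - 1), v ≠ 0 ∧ hammingNorm v = w} (p - 3) := by
  have h2 : 2 ≤ pisano p := hb ▸ betaP_le_pisano p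
  rw [show p - 3 = pisano p - betaP p by omega, ← hl]
  exact ⟨finrank_fibCode h2, isLeast_hammingNorm_fibCode h2⟩

/-- For an odd prime `p` with Pisano period `l_p = p - 1` and `β(p) = 2`,
the cyclic code `C = ⟨f(x)⟩` of length `p - 1` over `F_p` has dimension `2` and minimum
Hamming distance `p - 3`. -/
theorem fibCode_beta_two (p : ℕ) [Fact p.Prime] (hodd : Odd p)
    (hl : pisano p = p - 1) (hb : betaP p = 2) :
    Module.finrank (ZMod p) (fibCode p (p - 1)) = 2 ∧
      IsLeast {w : ℕ | ∃ v ∈ fibCode p (p - 1), v ≠ 0 ∧ hammingNorm v = w} (p - 3) :=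
  fibCode_beta_two_general p hl hb
end

section
/- Let p be an odd prime such that the Pisano period l_p equals p−1 and β(p) = 4. Then the cyclic code C = ⟨f(x)⟩ of length p−1 over F_p generated by the Fibonacci polynomial f(x) has F_p-dimension 2 and minimum Hamming distance p−5. -/
open Polynomial

/-!
The cyclic shifts of `f` are the windows `(F (i + m))_{i < l}` of the Fibonacci sequence, which
by `l`-periodicity of `F` span the two-dimensional space of windows of solutions of the Fibonacci
recurrence. A nonzero solution vanishing at `j` equals `u (j + 1) * F (n - j)` from `j` on, so it
has at most `β(p)` zeros in a period; `f` itself attains this bound, so the minimum distance is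
`l_p - β(p) = p - 5`.
-/

open Finset

namespace FibCode

variable {p : ℕ}

def IsFibRec (u : ℕ → ZMod p) : Prop := ∀ n, u (n + 2) = u (n + 1) + u n

theorem isFibRec_fibMod : IsFibRec (fibMod p) := fun _ => rfl

theorem IsFibRec.add_fibMod {u : ℕ → ZMod p} (hu : IsFibRec u) (m : ℕ) :
    ∀ n, u (m + n + 1) = u m * fibMod p n + u (m + 1) * fibMod p (n + 1)
  | 0 => by simp [fibMod]
  | 1 => by
    show u (m + 2) = u m * 1 + u (m + 1) * (1 + 0)
    rw [hu]; ring
  | n + 2 => by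
    have h0 := hu.add_fibMod m n
    have h1 := hu.add_fibMod m (n + 1)
    rw [show m + (n + 2) + 1 = m + n + 1 + 2 by omega, hu, show m + n + 1 + 1 = m + (n + 1) + 1 by
      omega, h0, h1]
    simp only [isFibRec_fibMod (n + 1), isFibRec_fibMod n]
    ring

theorem IsFibRec.eq_mul_fibMod {u : ℕ → ZMod p} (hu : IsFibRec u) {j : ℕ} (hj : u j = 0) :
    ∀ n, u (j + n) = u (j + 1) * fibMod p n
  | 0 => by simp [hj, fibMod]
  | n + 1 => by rw [← add_assoc, hu.add_fibMod, hj, zero_mul, zero_add]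

theorem IsFibRec.initial_eq_zero {u : ℕ → ZMod p} (hu : IsFibRec u) :
    ∀ {j}, u j = 0 → u (j + 1) = 0 → u 0 = 0 ∧ u 1 = 0
  | 0, h0, h1 => ⟨h0, h1⟩
  | j + 1, h1, h2 => hu.initial_eq_zero (by simpa [h1, h2] using (hu j).symm) h1

/-- From its first zero `j` on, `u` is the multiple `u (j + 1) * F (n - j)` of the Fibonacci
sequence, so `n ↦ n - j` maps its zeros in `[0, l)` injectively to those of `F`. -/
theorem IsFibRec.card_zeros_le [Fact p.Prime] {u : ℕ → ZMod p} (hu : IsFibRec u)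
    (hu₀ : ¬(u 0 = 0 ∧ u 1 = 0)) (l : ℕ) :
    #{i ∈ range l | u i = 0} ≤ #{i ∈ range l | fibMod p i = 0} := by
  rcases (filter (fun i => u i = 0) (range l)).eq_empty_or_nonempty with hS | hS
  · simp [hS]
  set j := (filter (fun i => u i = 0) (range l)).min' hS
  have hj : u j = 0 := (mem_filter.mp (min'_mem _ hS)).2
  have hj₁ : u (j + 1) ≠ 0 := fun h => hu₀ (hu.initial_eq_zero hj h)
  refine card_le_card_of_injOn (· - j) (fun i hi => ?_) (fun i hi i' hi' h => ?_)
  · have hji : j ≤ i := min'_le _ _ hi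
    obtain ⟨hil, hui⟩ := mem_filter.mp hi
    rw [← Nat.add_sub_cancel' hji, hu.eq_mul_fibMod hj] at hui
    exact mem_filter.mpr ⟨mem_range.mpr (show i - j < l by simp only [mem_range] at hil; omega),
      (mul_eq_zero.mp hui).resolve_left hj₁⟩
  · have := min'_le _ _ hi
    have := min'_le _ _ hi'
    simp only at h
    omega

theorem pisano_spec (h : 0 < pisano p) :
    fibMod p (pisano p) = 0 ∧ fibMod p (pisano p + 1) = 1 := by
  have hne : {t | 0 < t ∧ fibMod p t = 0 ∧ fibMod p (t + 1) = 1}.Nonempty := by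
    by_contra hemp
    rw [Set.not_nonempty_iff_eq_empty] at hemp
    simp [pisano, hemp] at h
  exact (Nat.sInf_mem hne).2

theorem fibMod_periodic (h : 0 < pisano p) : Function.Periodic (fibMod p) (pisano p)
  | 0 => by simp [(pisano_spec h).1, fibMod]
  | n + 1 => by
    rw [show n + 1 + pisano p = pisano p + n + 1 by ring, isFibRec_fibMod.add_fibMod,
      (pisano_spec h).1, (pisano_spec h).2]
    ring

theorem one_lt_pisano [Fact p.Prime] (h : 0 < pisano p) : 1 < pisano p := by
  by_contra h1
  have h0 := (pisano_spec h).1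
  rw [show pisano p = 1 by omega] at h0
  exact one_ne_zero h0

def fibVec (p l m : ℕ) : Fin l → ZMod p := fun i => fibMod p (i + m)

theorem fibVec_add_two (l m : ℕ) : fibVec p l (m + 2) = fibVec p l (m + 1) + fibVec p l m :=
  funext fun i => isFibRec_fibMod (i + m)

theorem fibVec_mem_span (l : ℕ) :
    ∀ m, fibVec p l m ∈ Submodule.span (ZMod p) {fibVec p l 0, fibVec p l 1}
  | 0 => Submodule.subset_span (by simp)
  | 1 => Submodule.subset_span (by simp)
  | m + 2 => by
    rw [fibVec_add_two]
    exact add_mem (fibVec_mem_span l (m + 1)) (fibVec_mem_span l m)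

theorem fibVec_mod (h : 0 < pisano p) (m : ℕ) :
    fibVec p (pisano p) (m % pisano p) = fibVec p (pisano p) m := by
  funext i
  simp only [fibVec]
  rw [← (fibMod_periodic h).map_mod_nat, Nat.add_mod_mod, (fibMod_periodic h).map_mod_nat]

theorem cyclicShift_fibVec (h : 0 < pisano p) (m : ℕ) :
    cyclicShift p (pisano p) (fibVec p (pisano p) m) =
      fibVec p (pisano p) (m + (pisano p - 1)) := by
  funext i
  simp only [cyclicShift, fibVec]
  rw [← (fibMod_periodic h).map_mod_nat, Nat.mod_add_mod, (fibMod_periodic h).map_mod_nat]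
  ring_nf

theorem polyVec_fibPoly : polyVec p (pisano p) (fibPoly p) = fibVec p (pisano p) 0 := by
  funext i
  simp [polyVec, fibVec, fibPoly, coeff_C_mul, coeff_X_pow]

theorem iterate_cyclicShift_fibPoly (h : 0 < pisano p) (k : ℕ) :
    (cyclicShift p (pisano p))^[k] (polyVec p (pisano p) (fibPoly p)) =
      fibVec p (pisano p) (k * (pisano p - 1)) := by
  induction k with
  | zero => simp [polyVec_fibPoly]
  | succ k ih => rw [Function.iterate_succ_apply', ih, cyclicShift_fibVec h, add_one_mul]

theorem sub_one_mul_sub_one_mod {l : ℕ} (hl : 0 < l) : (l - 1) * (l - 1) % l = 1 % l := by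
  obtain ⟨_ | n, rfl⟩ := Nat.exists_eq_add_one_of_ne_zero hl.ne'
  · rfl
  · rw [Nat.add_sub_cancel, show (n + 1) * (n + 1) = (n + 1 + 1) * n + 1 by ring,
      Nat.mul_add_mod]

theorem fibCode_eq_span (h : 0 < pisano p) :
    fibCode p (pisano p) =
      Submodule.span (ZMod p) {fibVec p (pisano p) 0, fibVec p (pisano p) 1} := by
  apply le_antisymm
  · refine Submodule.span_le.mpr ?_
    rintro _ ⟨k, rfl⟩
    rw [iterate_cyclicShift_fibPoly h]
    exact fibVec_mem_span _ _
  · refine Submodule.span_le.mpr ?_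
    rintro _ (rfl | rfl) <;> apply Submodule.subset_span
    · exact ⟨0, polyVec_fibPoly.symm⟩
    · -- `l - 1` shifts move the window by `(l - 1)² ≡ 1` places
      refine ⟨pisano p - 1, ?_⟩
      rw [iterate_cyclicShift_fibPoly h, ← fibVec_mod h, ← sub_one_mul_sub_one_mod h,
        fibVec_mod h]

theorem finrank_span_fibVec [Fact p.Prime] {l : ℕ} (hl : 1 < l) :
    Module.finrank (ZMod p) (Submodule.span (ZMod p) {fibVec p l 0, fibVec p l 1}) = 2 := by
  have hli : LinearIndependent (ZMod p) ![fibVec p l 0, fibVec p l 1] := by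
    refine LinearIndependent.pair_iff.mpr fun a b hab => ?_
    have hb : b = 0 := by simpa [fibVec, fibMod] using congrFun hab ⟨0, by omega⟩
    have ha : a = 0 := by simpa [fibVec, fibMod, hb] using congrFun hab ⟨1, hl⟩
    exact ⟨ha, hb⟩
  rw [← Matrix.range_cons_cons_empty _ _ ![], finrank_span_eq_card hli, Fintype.card_fin]

theorem card_filter_fin_eq_card_filter_range (l : ℕ) (P : ℕ → Prop) [DecidablePred P] :
    #{i : Fin l | P i} = #{i ∈ range l | P i} := by
  rw [← Nat.Iio_eq_range, ← Fin.map_valEmbedding_univ, filter_map, card_map]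
  rfl

theorem hammingNorm_eq_sub_card_zeros (l : ℕ) (u : ℕ → ZMod p) :
    hammingNorm (fun i : Fin l => u i) = l - #{i ∈ range l | u i = 0} := by
  have h := card_filter_add_card_filter_not (s := range l) (fun i => u i = 0)
  rw [card_range] at h
  rw [hammingNorm, card_filter_fin_eq_card_filter_range l (fun i => u i ≠ 0)]
  simp only [ne_eq]
  omega

theorem finrank_fibCode [Fact p.Prime] (h : 0 < pisano p) :
    Module.finrank (ZMod p) (fibCode p (pisano p)) = 2 := by
  rw [fibCode_eq_span h, finrank_span_fibVec (one_lt_pisano h)]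

theorem pisano_sub_betaP_le_hammingNorm [Fact p.Prime] (h : 0 < pisano p)
    {v : Fin (pisano p) → ZMod p}
    (hv : v ∈ fibCode p (pisano p)) (hv₀ : v ≠ 0) : pisano p - betaP p ≤ hammingNorm v := by
  rw [fibCode_eq_span h, Submodule.mem_span_pair] at hv
  obtain ⟨a, b, rfl⟩ := hv
  set u : ℕ → ZMod p := fun n => a * fibMod p n + b * fibMod p (n + 1)
  have hu : IsFibRec u := fun n => by
    simp only [u, isFibRec_fibMod (n + 1), isFibRec_fibMod n]
    ring
  have hu₀ : ¬(u 0 = 0 ∧ u 1 = 0) := by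
    rintro ⟨h0, h1⟩
    have hb : b = 0 := by simpa [u, fibMod] using h0
    have ha : a = 0 := by simpa [u, fibMod, hb] using h1
    exact hv₀ (by simp [ha, hb])
  have hvu : a • fibVec p (pisano p) 0 + b • fibVec p (pisano p) 1 =
      fun i : Fin (pisano p) => u i := by
    funext i
    simp [fibVec, u]
  rw [hvu, hammingNorm_eq_sub_card_zeros]
  exact Nat.sub_le_sub_left (hu.card_zeros_le hu₀ _) _

theorem hammingNorm_fibVec_zero :
    hammingNorm (fibVec p (pisano p) 0) = pisano p - betaP p :=
  hammingNorm_eq_sub_card_zeros (pisano p) (fibMod p)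

theorem isLeast_hammingNorm_fibCode [Fact p.Prime] (h : 0 < pisano p) :
    IsLeast {w | ∃ v ∈ fibCode p (pisano p), v ≠ 0 ∧ hammingNorm v = w}
      (pisano p - betaP p) := by
  refine ⟨⟨fibVec p (pisano p) 0, ?_, fun h0 => ?_, hammingNorm_fibVec_zero⟩, ?_⟩
  · rw [fibCode_eq_span h]
    exact Submodule.subset_span (by simp)
  · simpa [fibVec, fibMod] using congrFun h0 ⟨1, one_lt_pisano h⟩
  · rintro _ ⟨v, hv, hv₀, rfl⟩
    exact pisano_sub_betaP_le_hammingNorm h hv hv₀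

end FibCode

open FibCode in
theorem fibCode_beta_four_general (p : ℕ) [Fact p.Prime]
    (hl : pisano p = p - 1) (hb : betaP p = 4) :
    Module.finrank (ZMod p) (fibCode p (p - 1)) = 2 ∧
      IsLeast {w : ℕ | ∃ v ∈ fibCode p (p - 1), v ≠ 0 ∧ hammingNorm v = w} (p - 5) := by
  have hpos : 0 < pisano p := by
    by_contra h0
    simp [betaP, show pisano p = 0 by omega] at hb
  have hrank := finrank_fibCode hpos
  have hweight := isLeast_hammingNorm_fibCode hpos
  rw [hl] at hrank hweight
  rw [hb, Nat.sub_sub] at hweight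
  exact ⟨hrank, hweight⟩

/-- For an odd prime `p` with Pisano period `l_p = p - 1` and `β(p) = 4`,
the cyclic code `C = ⟨f(x)⟩` of length `p - 1` over `F_p` has dimension `2` and minimum
Hamming distance `p - 5`. -/
theorem fibCode_beta_four (p : ℕ) [Fact p.Prime] (hodd : Odd p)
    (hl : pisano p = p - 1) (hb : betaP p = 4) :
    Module.finrank (ZMod p) (fibCode p (p - 1)) = 2 ∧
      IsLeast {w : ℕ | ∃ v ∈ fibCode p (p - 1), v ≠ 0 ∧ hammingNorm v = w} (p - 5) :=
  fibCode_beta_four_general p hl hb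
end
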